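/- Let $1 < p \le 2$ and let $\Psi$ be an unconditional basis of $L_p(\Omega, \mu)$ with $\|\psi_n\|_p \le 1$. Then there is a constant $C(p, \Psi)$ such that for all $f$ with finite $A_1$-norm, all $m \ge 1$, and all $\alpha \in [0,1]$: $\|f - G_m(f, \Psi)\|_p \le C(p, \Psi)\, m^{-\alpha(1-1/p)}\, \|f\|_p^{1-\alpha} \|f\|_{A_1(\Psi)}^{\alpha}$. -/

import Mathlib

open Finset MeasureTheory
open scoped ENNReal

/-!
For `1 ≤ q ≤ 2` the parallelogram law and two power-mean inequalities give Clarkson's inequality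
`‖x + y‖^q + ‖x - y‖^q ≤ 2 (‖x‖^q + ‖y‖^q)` pointwise, hence in `L_q` after integration.
Choosing signs one term at a time then yields `‖∑ ε_n c_n ψ_n‖^q ≤ ∑ |c_n|^q` for some signs
`ε_n = ±1`, and unconditionality removes the signs at the cost of a factor `2K`: an upper
`q`-estimate `‖∑ c_n ψ_n‖ ≤ 2K (∑ |c_n|^q)^{1/q}`.

After `m` greedy steps every remaining coefficient is at most `A / m`, where `A = ‖f‖_{A₁}`, so
the residual coefficients satisfy `∑ |c_n|^q ≤ (A / m)^{q-1} A` and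
`‖f - G_m f‖ ≤ 2K A m^{-(1 - 1/q)}`. Unconditionality alone gives `‖f - G_m f‖ ≤ K ‖f‖`, and the
theorem is the interpolation `t ≤ a^{1-α} b^α` of the two bounds `t ≤ a`, `t ≤ b`.
-/

theorem ENNReal.rpow_add_rpow_le_two_mul_of_sq_add_sq_eq {u v x y : ℝ≥0∞} {q : ℝ}
    (hq0 : 0 < q) (hq2 : q ≤ 2) (h : u ^ 2 + v ^ 2 = 2 * (x ^ 2 + y ^ 2)) :
    u ^ q + v ^ q ≤ 2 * (x ^ q + y ^ q) := by
  have hpow : ∀ z : ℝ≥0∞, (z ^ q) ^ (2 / q) = z ^ 2 := fun z => by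
    rw [← ENNReal.rpow_mul, mul_div_cancel₀ _ hq0.ne', ENNReal.rpow_two]
  -- power-mean inequality for the exponent `2 / q ≥ 1`, then subadditivity of `t ↦ t ^ (q / 2)`
  have hmean : (u ^ q + v ^ q) ^ (2 / q) ≤ 2 ^ (2 / q) * (x ^ 2 + y ^ 2) := by
    calc (u ^ q + v ^ q) ^ (2 / q) ≤ 2 ^ (2 / q - 1) * (u ^ 2 + v ^ 2) := by
          simpa only [hpow] using ENNReal.rpow_add_le_mul_rpow_add_rpow (u ^ q) (v ^ q)
            ((one_le_div hq0).mpr hq2)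
      _ = 2 ^ (2 / q) * (x ^ 2 + y ^ 2) := by
          rw [h, ← mul_assoc]
          nth_rewrite 2 [← ENNReal.rpow_one 2]
          rw [← ENNReal.rpow_add _ _ two_ne_zero ENNReal.ofNat_ne_top, sub_add_cancel]
  have hsub : (x ^ 2 + y ^ 2) ^ (q / 2) ≤ x ^ q + y ^ q := by
    have hhalf : ∀ z : ℝ≥0∞, (z ^ 2) ^ (q / 2) = z ^ q := fun z => by
      rw [← ENNReal.rpow_two, ← ENNReal.rpow_mul, mul_div_cancel₀ _ two_ne_zero]
    have := ENNReal.rpow_add_le_add_rpow (x ^ (2 : ℕ)) (y ^ (2 : ℕ)) (p := q / 2) (by positivity)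
      (by linarith)
    rwa [hhalf, hhalf] at this
  calc u ^ q + v ^ q = ((u ^ q + v ^ q) ^ (2 / q)) ^ (q / 2) := by
        rw [← ENNReal.rpow_mul, div_mul_div_cancel₀ hq0.ne', div_self two_ne_zero,
          ENNReal.rpow_one]
    _ ≤ (2 ^ (2 / q) * (x ^ 2 + y ^ 2)) ^ (q / 2) := by gcongr
    _ = 2 * (x ^ 2 + y ^ 2) ^ (q / 2) := by
        rw [ENNReal.mul_rpow_of_nonneg _ _ (by positivity), ← ENNReal.rpow_mul,
          div_mul_div_cancel₀ hq0.ne', div_self two_ne_zero, ENNReal.rpow_one]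
    _ ≤ 2 * (x ^ q + y ^ q) := by gcongr

theorem enorm_add_rpow_add_enorm_sub_rpow_le {E : Type*} [NormedAddCommGroup E]
    [InnerProductSpace ℝ E] {q : ℝ} (hq0 : 0 < q) (hq2 : q ≤ 2) (x y : E) :
    ‖x + y‖ₑ ^ q + ‖x - y‖ₑ ^ q ≤ 2 * (‖x‖ₑ ^ q + ‖y‖ₑ ^ q) := by
  refine ENNReal.rpow_add_rpow_le_two_mul_of_sq_add_sq_eq hq0 hq2 ?_
  simp only [enorm_eq_nnnorm]
  exact_mod_cast parallelogram_law_with_nnnorm ℝ x y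

namespace MeasureTheory.Lp

variable {Ω E : Type*} [MeasurableSpace Ω] {μ : Measure Ω} [NormedAddCommGroup E]
  {p : ℝ≥0∞} [Fact (1 ≤ p)]

theorem enorm_rpow_eq_lintegral (hp : p ≠ ∞) (f : Lp E p μ) :
    ‖f‖ₑ ^ p.toReal = ∫⁻ x, ‖f x‖ₑ ^ p.toReal ∂μ := by
  have hp0 : p ≠ 0 := (lt_of_lt_of_le one_pos Fact.out).ne'
  rw [Lp.enorm_def, eLpNorm_eq_eLpNorm' hp0 hp,
    lintegral_rpow_enorm_eq_rpow_eLpNorm' (ENNReal.toReal_pos hp0 hp)]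

theorem enorm_add_rpow_add_enorm_sub_rpow_le [InnerProductSpace ℝ E] (hp2 : p ≤ 2)
    (f g : Lp E p μ) :
    ‖f + g‖ₑ ^ p.toReal + ‖f - g‖ₑ ^ p.toReal ≤ 2 * (‖f‖ₑ ^ p.toReal + ‖g‖ₑ ^ p.toReal) := by
  have hp : p ≠ ∞ := ne_top_of_le_ne_top ENNReal.ofNat_ne_top hp2
  have hq0 : 0 < p.toReal := ENNReal.toReal_pos (lt_of_lt_of_le one_pos Fact.out).ne' hp
  have hq2 : p.toReal ≤ 2 := ENNReal.toReal_le_of_le_ofReal zero_le_two (by simpa using hp2)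
  have hmeas : ∀ h : Lp E p μ, AEMeasurable (fun x => ‖h x‖ₑ ^ p.toReal) μ := fun h =>
    (Lp.aestronglyMeasurable h).enorm.pow_const _
  simp only [enorm_rpow_eq_lintegral hp]
  rw [← lintegral_add_left' (hmeas _), ← lintegral_add_left' (hmeas _),
    ← lintegral_const_mul' _ _ ENNReal.ofNat_ne_top]
  refine lintegral_mono_ae ?_
  filter_upwards [Lp.coeFn_add f g, Lp.coeFn_sub f g] with x hadd hsub
  rw [hadd, hsub]
  exact _root_.enorm_add_rpow_add_enorm_sub_rpow_le hq0 hq2 (f x) (g x)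

theorem norm_add_rpow_add_norm_sub_rpow_le [InnerProductSpace ℝ E] (hp2 : p ≤ 2) (f g : Lp E p μ) :
    ‖f + g‖ ^ p.toReal + ‖f - g‖ ^ p.toReal ≤ 2 * (‖f‖ ^ p.toReal + ‖g‖ ^ p.toReal) := by
  have h := enorm_add_rpow_add_enorm_sub_rpow_le hp2 f g
  simp only [← ofReal_norm, ENNReal.ofReal_rpow_of_nonneg (norm_nonneg _) ENNReal.toReal_nonneg]
    at h
  rw [← ENNReal.ofReal_add (by positivity) (by positivity),
    ← ENNReal.ofReal_add (by positivity) (by positivity), ← ENNReal.ofReal_ofNat 2,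
    ← ENNReal.ofReal_mul zero_le_two] at h
  exact (ENNReal.ofReal_le_ofReal_iff (by positivity)).1 h

end MeasureTheory.Lp

theorem exists_sign_norm_sum_smul_rpow_le {ι E : Type*} [SeminormedAddCommGroup E] [Module ℝ E]
    {q : ℝ} (hq0 : 0 < q)
    (hclarkson : ∀ x y : E, ‖x + y‖ ^ q + ‖x - y‖ ^ q ≤ 2 * (‖x‖ ^ q + ‖y‖ ^ q))
    (a : ι → E) (S : Finset ι) :
    ∃ ε : ι → ℝ, (∀ n, ε n = 1 ∨ ε n = -1) ∧
      ‖∑ n ∈ S, ε n • a n‖ ^ q ≤ ∑ n ∈ S, ‖a n‖ ^ q := by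
  classical
  induction S using Finset.induction with
  | empty => exact ⟨fun _ => 1, fun _ => Or.inl rfl, by simp [Real.zero_rpow hq0.ne']⟩
  | @insert j S hj ih =>
    obtain ⟨ε, hε, hle⟩ := ih
    set x := ∑ n ∈ S, ε n • a n
    -- the better of the two signs does at least as well as their average
    obtain ⟨s, hs, hmin⟩ : ∃ s : ℝ, (s = 1 ∨ s = -1) ∧
        ‖s • a j + x‖ ^ q ≤ ‖x‖ ^ q + ‖a j‖ ^ q := by
      have hcl := hclarkson x (a j)
      rcases le_total ‖x + a j‖ ‖x - a j‖ with h | h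
      · have hpow := Real.rpow_le_rpow (norm_nonneg _) h hq0.le
        refine ⟨1, Or.inl rfl, ?_⟩
        rw [one_smul, add_comm]
        linarith
      · have hpow := Real.rpow_le_rpow (norm_nonneg _) h hq0.le
        refine ⟨-1, Or.inr rfl, ?_⟩
        rw [neg_one_smul, neg_add_eq_sub]
        linarith
    refine ⟨Function.update ε j s, fun n => ?_, ?_⟩
    · rcases eq_or_ne n j with rfl | hn
      · simpa using hs
      · simpa [Function.update_of_ne hn] using hε n
    · have hS : ∑ n ∈ S, Function.update ε j s n • a n = x :=
        Finset.sum_congr rfl fun n hn => by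
          rw [Function.update_of_ne (ne_of_mem_of_not_mem hn hj)]
      rw [Finset.sum_insert hj, Finset.sum_insert hj, Function.update_self, hS]
      linarith

section UnconditionalBasis

variable {ι E : Type*} [NormedAddCommGroup E] [NormedSpace ℝ E] {ψ : ι → E} {cf : E → ι → ℝ}
  {K : ℝ}

def HasUniqueCoeffs (ψ : ι → E) (cf : E → ι → ℝ) : Prop :=
  ∀ (g : E) (c : ι → ℝ), HasSum (fun n => c n • ψ n) g → c = cf g

def IsUnconditional (ψ : ι → E) (cf : E → ι → ℝ) (K : ℝ) : Prop :=
  ∀ (f : E) (Λ : Set ι), ∃ g : E, HasSum (fun n => Λ.indicator (cf f) n • ψ n) g ∧ ‖g‖ ≤ K * ‖f‖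

theorem hasSum_indicator_smul (ψ : ι → E) (S : Finset ι) (c : ι → ℝ) :
    HasSum (fun n => (S : Set ι).indicator c n • ψ n) (∑ n ∈ S, c n • ψ n) := by
  have hzero : ∀ n ∉ S, (S : Set ι).indicator c n • ψ n = 0 := fun n hn => by
    rw [Set.indicator_of_notMem (by exact hn), zero_smul]
  convert hasSum_sum_of_ne_finset_zero (L := SummationFilter.unconditional ι) hzero using 1
  exact Finset.sum_congr rfl fun n hn => by rw [Set.indicator_of_mem (by exact hn)]

theorem HasSum.indicator_compl_smul {c : ι → ℝ} {f : E} (hf : HasSum (fun n => c n • ψ n) f)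
    (T : Finset ι) :
    HasSum (fun n => (T : Set ι)ᶜ.indicator c n • ψ n) (f - ∑ n ∈ T, c n • ψ n) := by
  convert hf.sub (hasSum_indicator_smul ψ T c) using 2 with n
  rw [Set.indicator_compl, Pi.sub_apply, sub_smul]

theorem norm_sum_smul_le_of_sign (huniq : HasUniqueCoeffs ψ cf) (hunc : IsUnconditional ψ cf K)
    (S : Finset ι) (c ε : ι → ℝ) (hε : ∀ n, ε n = 1 ∨ ε n = -1) :
    ‖∑ n ∈ S, c n • ψ n‖ ≤ 2 * K * ‖∑ n ∈ S, (ε n * c n) • ψ n‖ := by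
  set g := ∑ n ∈ S, (ε n * c n) • ψ n
  have hg : cf g = (S : Set ι).indicator fun n => ε n * c n :=
    (huniq g _ (hasSum_indicator_smul ψ S _)).symm
  obtain ⟨gpos, hgpos, hgposK⟩ := hunc g {n | ε n = 1}
  obtain ⟨gneg, hgneg, hgnegK⟩ := hunc g {n | ε n = 1}ᶜ
  -- `∑ c ψ` is the positive-sign part of `g` minus its negative-sign part
  have hsplit : ∑ n ∈ S, c n • ψ n = gpos - gneg := by
    refine (hasSum_indicator_smul ψ S c).unique ?_
    convert hgpos.sub hgneg using 2 with n
    rw [← sub_smul, hg]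
    by_cases hn : n ∈ S <;> rcases hε n with h | h <;> norm_num [Set.indicator, hn, h]
  calc ‖∑ n ∈ S, c n • ψ n‖ ≤ ‖gpos‖ + ‖gneg‖ := hsplit ▸ norm_sub_le _ _
    _ ≤ 2 * K * ‖g‖ := by linarith

theorem norm_sum_smul_le_two_mul_sum_rpow {q : ℝ} (hq0 : 0 < q)
    (hclarkson : ∀ x y : E, ‖x + y‖ ^ q + ‖x - y‖ ^ q ≤ 2 * (‖x‖ ^ q + ‖y‖ ^ q))
    (hψ : ∀ n, ‖ψ n‖ ≤ 1) (hK : 0 ≤ K)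
    (huniq : HasUniqueCoeffs ψ cf) (hunc : IsUnconditional ψ cf K)
    (S : Finset ι) (c : ι → ℝ) :
    ‖∑ n ∈ S, c n • ψ n‖ ≤ 2 * K * (∑ n ∈ S, |c n| ^ q) ^ (1 / q) := by
  obtain ⟨ε, hε, hle⟩ := exists_sign_norm_sum_smul_rpow_le hq0 hclarkson (fun n => c n • ψ n) S
  simp only [smul_smul] at hle
  have hterm : ∀ n, ‖c n • ψ n‖ ^ q ≤ |c n| ^ q := fun n => by
    gcongr
    simpa [norm_smul] using mul_le_mul_of_nonneg_left (hψ n) (abs_nonneg (c n))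
  have hsign : ‖∑ n ∈ S, (ε n * c n) • ψ n‖ ≤ (∑ n ∈ S, |c n| ^ q) ^ (1 / q) := by
    rw [one_div, Real.le_rpow_inv_iff_of_pos (norm_nonneg _) (by positivity) hq0]
    exact hle.trans (Finset.sum_le_sum fun n _ => hterm n)
  calc ‖∑ n ∈ S, c n • ψ n‖ ≤ 2 * K * ‖∑ n ∈ S, (ε n * c n) • ψ n‖ :=
        norm_sum_smul_le_of_sign huniq hunc S c ε hε
    _ ≤ 2 * K * (∑ n ∈ S, |c n| ^ q) ^ (1 / q) := by gcongr

theorem norm_le_two_mul_rpow_of_hasSum {q : ℝ} (hq0 : 0 < q)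
    (hclarkson : ∀ x y : E, ‖x + y‖ ^ q + ‖x - y‖ ^ q ≤ 2 * (‖x‖ ^ q + ‖y‖ ^ q))
    (hψ : ∀ n, ‖ψ n‖ ≤ 1) (hK : 0 ≤ K)
    (huniq : HasUniqueCoeffs ψ cf) (hunc : IsUnconditional ψ cf K)
    {c : ι → ℝ} {g : E} (hg : HasSum (fun n => c n • ψ n) g) {B : ℝ}
    (hB : ∀ S : Finset ι, ∑ n ∈ S, |c n| ^ q ≤ B) :
    ‖g‖ ≤ 2 * K * B ^ (1 / q) :=
  le_of_tendsto' hg.norm fun S =>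
    (norm_sum_smul_le_two_mul_sum_rpow hq0 hclarkson hψ hK huniq hunc S c).trans
      (by gcongr; exact hB S)

end UnconditionalBasis

theorem mul_le_tsum_of_antitone_of_notMem {a : ℕ → ℝ} (ha : 0 ≤ a) (hs : Summable a)
    {e : ℕ ≃ ℕ} (he : Antitone fun j => a (e j)) {m n : ℕ}
    (hn : n ∉ (range m).map e.toEmbedding) :
    m * a n ≤ ∑' k, a k := by
  have hm : m ≤ e.symm n := by
    by_contra! h
    exact hn (Finset.mem_map.2 ⟨e.symm n, Finset.mem_range.2 h, e.apply_symm_apply n⟩)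
  calc m * a n = ∑ _j ∈ range m, a (e (e.symm n)) := by simp
    _ ≤ ∑ j ∈ range m, a (e j) :=
        Finset.sum_le_sum fun j hj => he ((Finset.mem_range.1 hj).le.trans hm)
    _ = ∑ k ∈ (range m).map e.toEmbedding, a k := by rw [Finset.sum_map]; rfl
    _ ≤ ∑' k, a k := hs.sum_le_tsum _ fun k _ => ha k

theorem Real.rpow_le_rpow_sub_one_mul {x M q : ℝ} (hx : 0 ≤ x) (hxM : x ≤ M) (hq : 1 ≤ q) :
    x ^ q ≤ M ^ (q - 1) * x :=
  calc x ^ q = x ^ (q - 1) * x := by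
        rw [← Real.rpow_add_one' hx (by linarith), sub_add_cancel]
    _ ≤ M ^ (q - 1) * x := by gcongr

theorem Real.div_rpow_sub_one_mul_rpow_one_div {a b q : ℝ} (ha : 0 ≤ a) (hb : 0 < b)
    (hq : 0 < q) :
    ((a / b) ^ (q - 1) * a) ^ (1 / q) = a * b ^ (-(1 - 1 / q)) := by
  rw [Real.div_rpow ha hb.le, div_mul_eq_mul_div, ← Real.rpow_add_one' ha (by linarith),
    sub_add_cancel, Real.div_rpow (by positivity) (by positivity), ← Real.rpow_mul ha,
    ← Real.rpow_mul hb.le, mul_one_div_cancel hq.ne', Real.rpow_one, div_eq_mul_inv,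
    ← Real.rpow_neg hb.le]
  congr 2
  field_simp

theorem le_mul_rpow_mul_rpow_of_le_of_le {t C a b α : ℝ} (ht : 0 ≤ t) (hC : 0 ≤ C) (ha : 0 ≤ a)
    (hb : 0 ≤ b) (hta : t ≤ C * a) (htb : t ≤ C * b) (hα0 : 0 ≤ α) (hα1 : α ≤ 1) :
    t ≤ C * (a ^ (1 - α) * b ^ α) :=
  calc t = t ^ (1 - α) * t ^ α := by
        rw [← Real.rpow_add' ht (by norm_num), sub_add_cancel, Real.rpow_one]
    _ ≤ (C * a) ^ (1 - α) * (C * b) ^ α := by gcongr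
    _ = C * (a ^ (1 - α) * b ^ α) := by
        rw [Real.mul_rpow hC ha, Real.mul_rpow hC hb, mul_mul_mul_comm,
          ← Real.rpow_add' hC (by norm_num), sub_add_cancel, Real.rpow_one]

section Greedy

variable {E : Type*} [NormedAddCommGroup E] [NormedSpace ℝ E] {ψ : ℕ → E} {cf : E → ℕ → ℝ}
  {K : ℝ}

theorem sum_abs_indicator_compl_rpow_le {c : ℕ → ℝ} (hs : Summable fun n => |c n|) {e : ℕ ≃ ℕ}
    (he : Antitone fun j => |c (e j)|) {m : ℕ} (hm : 0 < m) {q : ℝ} (hq : 1 ≤ q)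
    (S : Finset ℕ) :
    ∑ n ∈ S, |(((range m).map e.toEmbedding : Finset ℕ) : Set ℕ)ᶜ.indicator c n| ^ q ≤
      ((∑' n, |c n|) / m) ^ (q - 1) * ∑' n, |c n| := by
  set T := (range m).map e.toEmbedding
  set A := ∑' n, |c n|
  have hmpos : (0 : ℝ) < m := by exact_mod_cast hm
  have htail : ∀ n, |(T : Set ℕ)ᶜ.indicator c n| ≤ A / m := fun n => by
    by_cases hn : n ∈ T
    · simpa [hn] using div_nonneg (tsum_nonneg fun n => abs_nonneg (c n)) hmpos.le
    · rw [Set.indicator_of_mem (by exact hn), le_div_iff₀ hmpos, mul_comm]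
      exact mul_le_tsum_of_antitone_of_notMem (fun _ => abs_nonneg _) hs he hn
  have hdrop : ∀ n, |(T : Set ℕ)ᶜ.indicator c n| ≤ |c n| := fun n => by
    by_cases hn : n ∈ (T : Set ℕ)ᶜ <;> simp [hn]
  calc ∑ n ∈ S, |(T : Set ℕ)ᶜ.indicator c n| ^ q
      ≤ ∑ n ∈ S, (A / m) ^ (q - 1) * |(T : Set ℕ)ᶜ.indicator c n| :=
        Finset.sum_le_sum fun n _ => Real.rpow_le_rpow_sub_one_mul (abs_nonneg _) (htail n) hq
    _ ≤ (A / m) ^ (q - 1) * A := by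
        rw [← Finset.mul_sum]
        gcongr
        exact (Finset.sum_le_sum fun n _ => hdrop n).trans
          (hs.sum_le_tsum S fun n _ => abs_nonneg _)

theorem hasSum_sub_sum_range_smul {c : ℕ → ℝ} {f : E} (hf : HasSum (fun n => c n • ψ n) f)
    (e : ℕ ≃ ℕ) (m : ℕ) :
    HasSum (fun n => (((range m).map e.toEmbedding : Finset ℕ) : Set ℕ)ᶜ.indicator c n • ψ n)
      (f - ∑ j ∈ range m, c (e j) • ψ (e j)) := by
  convert hf.indicator_compl_smul ((range m).map e.toEmbedding) using 2
  rw [Finset.sum_map]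
  rfl

theorem norm_sub_sum_range_smul_le (hunc : IsUnconditional ψ cf K) {f : E}
    (hf : HasSum (fun n => cf f n • ψ n) f) (e : ℕ ≃ ℕ) (m : ℕ) :
    ‖f - ∑ j ∈ range m, cf f (e j) • ψ (e j)‖ ≤ K * ‖f‖ := by
  obtain ⟨g, hg, hgK⟩ := hunc f (((range m).map e.toEmbedding : Finset ℕ) : Set ℕ)ᶜ
  rwa [(hasSum_sub_sum_range_smul hf e m).unique hg]

theorem norm_sub_sum_range_smul_le_tsum_mul_rpow {q : ℝ} (hq : 1 ≤ q)
    (hclarkson : ∀ x y : E, ‖x + y‖ ^ q + ‖x - y‖ ^ q ≤ 2 * (‖x‖ ^ q + ‖y‖ ^ q))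
    (hψ : ∀ n, ‖ψ n‖ ≤ 1) (hK : 0 ≤ K)
    (huniq : HasUniqueCoeffs ψ cf) (hunc : IsUnconditional ψ cf K)
    {f : E} (hf : HasSum (fun n => cf f n • ψ n) f) (hs : Summable fun n => |cf f n|)
    {e : ℕ ≃ ℕ} (he : Antitone fun j => |cf f (e j)|) {m : ℕ} (hm : 0 < m) :
    ‖f - ∑ j ∈ range m, cf f (e j) • ψ (e j)‖ ≤
      2 * K * ((∑' n, |cf f n|) * (m : ℝ) ^ (-(1 - 1 / q))) := by
  rw [← Real.div_rpow_sub_one_mul_rpow_one_div (tsum_nonneg fun _ => abs_nonneg _)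
    (by exact_mod_cast hm) (by linarith)]
  exact norm_le_two_mul_rpow_of_hasSum (by linarith) hclarkson hψ hK huniq hunc
    (hasSum_sub_sum_range_smul hf e m) (sum_abs_indicator_compl_rpow_le hs he hm hq)

end Greedy

theorem stmt8_general {Ω : Type*} [MeasurableSpace Ω] (μ : Measure Ω)
    (p : ℝ≥0∞) [Fact (1 ≤ p)] (hp2 : p ≤ 2)
    (ψ : ℕ → Lp ℝ p μ) (hψ : ∀ n, ‖ψ n‖ ≤ 1)
    (cf : Lp ℝ p μ → ℕ → ℝ)
    (hbasis : ∀ f, HasSum (fun n => cf f n • ψ n) f)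
    (huniq : ∀ (g : Lp ℝ p μ) (c : ℕ → ℝ), HasSum (fun n => c n • ψ n) g → c = cf g)
    (K : ℝ) (hK : 0 < K)
    (hunc : ∀ (f : Lp ℝ p μ) (Λ : Set ℕ),
      ∃ g : Lp ℝ p μ, HasSum (fun n => Λ.indicator (cf f) n • ψ n) g ∧ ‖g‖ ≤ K * ‖f‖) :
    ∃ C > 0, ∀ f : Lp ℝ p μ, Summable (fun n => |cf f n|) →
      ∀ e : ℕ ≃ ℕ, Antitone (fun j => |cf f (e j)|) →
      ∀ m : ℕ, 1 ≤ m → ∀ α : ℝ, 0 ≤ α → α ≤ 1 →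
      ‖f - ∑ j ∈ Finset.range m, cf f (e j) • ψ (e j)‖ ≤
        C * (m : ℝ) ^ (-(α * (1 - 1 / p.toReal))) * ‖f‖ ^ (1 - α) * (∑' n, |cf f n|) ^ α := by
  refine ⟨2 * K, by positivity, fun f hs e he m hm α hα0 hα1 => ?_⟩
  have hq : 1 ≤ p.toReal := by
    simpa using ENNReal.toReal_mono (ne_top_of_le_ne_top ENNReal.ofNat_ne_top hp2)
      (Fact.out : 1 ≤ p)
  have hbound0 : ‖f - ∑ j ∈ range m, cf f (e j) • ψ (e j)‖ ≤ 2 * K * ‖f‖ :=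
    (norm_sub_sum_range_smul_le hunc (hbasis f) e m).trans (by nlinarith [norm_nonneg f])
  have hbound1 := norm_sub_sum_range_smul_le_tsum_mul_rpow hq
    (Lp.norm_add_rpow_add_norm_sub_rpow_le hp2) hψ hK.le huniq hunc (hbasis f) hs he hm
  calc _ ≤ 2 * K * (‖f‖ ^ (1 - α) * ((∑' n, |cf f n|) * (m : ℝ) ^ (-(1 - 1 / p.toReal))) ^ α) :=
        le_mul_rpow_mul_rpow_of_le_of_le (norm_nonneg _) (by positivity) (norm_nonneg _)
          (by positivity) hbound0 hbound1 hα0 hα1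
    _ = _ := by
        rw [Real.mul_rpow (by positivity) (by positivity), ← Real.rpow_mul (Nat.cast_nonneg m)]
        ring_nf

/-- Let `1 < p ≤ 2` and let `Ψ = (ψ n)` be an unconditional basis of `L_p(Ω, μ)` with
`‖ψ n‖_p ≤ 1`. Here `cf f` is the coefficient sequence of `f` (expansions are unique),
and unconditionality is expressed by the uniform boundedness of the coordinate
projections `P_Λ`. Then there is a constant `C = C(p, Ψ)` such that for every `f` with
absolutely summable coefficients (finite `A₁`-norm), every realization of the TGA (given
by a decreasing rearrangement `e` of the coefficients), every `m ≥ 1` and `α ∈ [0,1]`: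
`‖f - G_m(f, Ψ)‖_p ≤ C m^(-α(1-1/p)) ‖f‖_p^(1-α) ‖f‖_{A₁(Ψ)}^α`. -/
theorem stmt8 {Ω : Type*} [MeasurableSpace Ω] (μ : Measure Ω)
    (p : ℝ≥0∞) [Fact (1 ≤ p)] (hp1 : 1 < p) (hp2 : p ≤ 2)
    (ψ : ℕ → Lp ℝ p μ) (hψ : ∀ n, ‖ψ n‖ ≤ 1)
    (cf : Lp ℝ p μ → ℕ → ℝ)
    (hbasis : ∀ f, HasSum (fun n => cf f n • ψ n) f)
    (huniq : ∀ (g : Lp ℝ p μ) (c : ℕ → ℝ), HasSum (fun n => c n • ψ n) g → c = cf g)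
    (K : ℝ) (hK : 0 < K)
    (hunc : ∀ (f : Lp ℝ p μ) (Λ : Set ℕ),
      ∃ g : Lp ℝ p μ, HasSum (fun n => Λ.indicator (cf f) n • ψ n) g ∧ ‖g‖ ≤ K * ‖f‖) :
    ∃ C > 0, ∀ f : Lp ℝ p μ, Summable (fun n => |cf f n|) →
      ∀ e : ℕ ≃ ℕ, Antitone (fun j => |cf f (e j)|) →
      ∀ m : ℕ, 1 ≤ m → ∀ α : ℝ, 0 ≤ α → α ≤ 1 →
      ‖f - ∑ j ∈ Finset.range m, cf f (e j) • ψ (e j)‖ ≤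
        C * (m : ℝ) ^ (-(α * (1 - 1 / p.toReal))) * ‖f‖ ^ (1 - α) * (∑' n, |cf f n|) ^ α :=
  stmt8_general μ p hp2 ψ hψ cf hbasis huniq K hK hunc
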